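/- Let T : I → I be a symmetric interval exchange transformation and β ∈ 𝒜 ∪ {1/2}. Assume there exist m ∈ ℤ and α ∈ 𝒜 such that T^m(c_β) = ∂I_α and T^k(c_β) is not a left endpoint ∂I_γ for any −|m| < k < |m|. Then: if m ≥ 0, one has α ≠ π₀⁻¹(1) and T^{−m − δ_{1/2}(β)}(c_β) = ∂I_α̂ with π₀(α̂) = π₀(α) − 1; if m < 0, one has α ≠ π₁⁻¹(1) and T^{−m − δ_{1/2}(β)}(c_β) = ∂I_α̂ with π₀(α̂) = π₀(α) + 1. In particular, c_β lies inside a non-trivial connection of T. -/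

import Mathlib

open MeasureTheory Set
open scoped Classical

/-- An interval exchange transformation (IET) on the interval `[a, b)`:
an alphabet `Fin d`, bijections `perm0`, `perm1 : Fin d ≃ Fin d` describing the order of
the exchanged intervals before and after applying the map, and a positive length vector
`len` summing up to `b - a`.  The permutation datum is assumed non-reducible. -/
structure IET where
  d : ℕ
  hd : 0 < d
  a : ℝ
  b : ℝ
  hab : a < b
  perm0 : Fin d ≃ Fin d
  perm1 : Fin d ≃ Fin d
  len : Fin d → ℝ
  len_pos : ∀ α, 0 < len α
  len_sum : ∑ α, len α = b - a
  irred : ∀ k : ℕ, 0 < k → k < d → ¬ (∀ α, (perm0 α : ℕ) < k ↔ (perm1 α : ℕ) < k)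

namespace IET

variable (T : IET)

/-- The left endpoint `∂I_α` of the exchanged interval `I_α`. -/
noncomputable def lep (α : Fin T.d) : ℝ :=
  T.a + ∑ β ∈ Finset.univ.filter (fun β => T.perm0 β < T.perm0 α), T.len β

/-- The left endpoint of the image interval `T(I_α)`. -/
noncomputable def lepImg (α : Fin T.d) : ℝ :=
  T.a + ∑ β ∈ Finset.univ.filter (fun β => T.perm1 β < T.perm1 α), T.len β

/-- The translation amount on `I_α`. -/
noncomputable def transl (α : Fin T.d) : ℝ := T.lepImg α - T.lep α

/-- The exchanged interval `I_α`. -/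
noncomputable def interval (α : Fin T.d) : Set ℝ :=
  Set.Ico (T.lep α) (T.lep α + T.len α)

/-- The image interval `T(I_α)`. -/
noncomputable def intervalImg (α : Fin T.d) : Set ℝ :=
  Set.Ico (T.lepImg α) (T.lepImg α + T.len α)

/-- The IET as a self-map of `ℝ`: it translates each `I_α` onto its image and is
the identity outside `[a, b)`. -/
noncomputable def toFun (x : ℝ) : ℝ :=
  x + ∑ α, if x ∈ T.interval α then T.transl α else 0

/-- The inverse IET `T⁻¹` as a self-map of `ℝ`. -/
noncomputable def invFun (x : ℝ) : ℝ :=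
  x + ∑ α, if x ∈ T.intervalImg α then -T.transl α else 0

/-- The iterate `T^n`, `n : ℤ` (negative iterates via `invFun`). -/
noncomputable def iter (n : ℤ) (x : ℝ) : ℝ :=
  if 0 ≤ n then T.toFun^[n.toNat] x else T.invFun^[(-n).toNat] x

/-- `M(β) = min {n ≥ 1 | T^{-n}(∂I_β) = ∂I_α for some α with π₁ α ≠ 1}`, with the
convention `M(π₀⁻¹ 1) = 1`, and `∞` if no such `n` exists. -/
noncomputable def M (β : Fin T.d) : ℕ∞ :=
  if (T.perm0 β : ℕ) = 0 then 1
  else sInf {e : ℕ∞ | ∃ n : ℕ, e = (n : ℕ∞) ∧ 1 ≤ n ∧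
    ∃ α : Fin T.d, (T.perm1 α : ℕ) ≠ 0 ∧ T.invFun^[n] (T.lep β) = T.lep α}

/-- `N(β) = min {n ≥ 1 | T^{n}(∂I_β) = ∂I_α for some α with π₀ α ≠ 1}`, with the
convention `N(π₁⁻¹ 1) = 1`, and `∞` if no such `n` exists. -/
noncomputable def N (β : Fin T.d) : ℕ∞ :=
  if (T.perm1 β : ℕ) = 0 then 1
  else sInf {e : ℕ∞ | ∃ n : ℕ, e = (n : ℕ∞) ∧ 1 ≤ n ∧
    ∃ α : Fin T.d, (T.perm0 α : ℕ) ≠ 0 ∧ T.toFun^[n] (T.lep β) = T.lep α}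

/-- `s` is a (non-trivial) connection of `T`: the orbit segment
`{T^{-k}(∂I_β) | 0 ≤ k ≤ n}` where `π₀ β ≠ 1`, `π₁ α ≠ 1`, `n ≥ 1` and
`T^{-n}(∂I_β) = ∂I_α`. -/
def IsConnection (s : Set ℝ) : Prop :=
  ∃ (β α : Fin T.d) (n : ℕ), (T.perm0 β : ℕ) ≠ 0 ∧ (T.perm1 α : ℕ) ≠ 0 ∧ 1 ≤ n ∧
    T.invFun^[n] (T.lep β) = T.lep α ∧
    s = (fun k : ℕ => T.invFun^[k] (T.lep β)) '' {k : ℕ | k ≤ n}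

/-- `T` is symmetric: `π₁ ∘ π₀⁻¹ (i) = d + 1 - i` (here with `Fin d` indexing:
`perm1 α + perm0 α + 1 = d`). -/
def IsSymm : Prop := ∀ α, (T.perm1 α : ℕ) + (T.perm0 α : ℕ) + 1 = T.d

/-- The midpoint `c_α` of the exchanged interval `I_α`. -/
noncomputable def center (α : Fin T.d) : ℝ := T.lep α + T.len α / 2

/-- The midpoint `c_{1/2}` of the interval `I = [a, b)`. -/
noncomputable def centerHalf : ℝ := (T.a + T.b) / 2

/-- Midpoints indexed by `𝒜 ∪ {1/2}`; `none` plays the role of `1/2`. -/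
noncomputable def centerOpt (β : Option (Fin T.d)) : ℝ :=
  match β with
  | none => T.centerHalf
  | some α => T.center α

/-- `δ_{1/2}`. -/
def deltaHalf (β : Option (Fin T.d)) : ℕ :=
  match β with
  | none => 1
  | some _ => 0

/-- The symmetric reflection `𝓘_I (x) = a + b - x` of `I = [a, b)`. -/
noncomputable def refl (x : ℝ) : ℝ := T.a + T.b - x

/-- The first return time `r_J(x) = min {n ≥ 1 | T^n x ∈ J}`. -/
noncomputable def returnTime (J : Set ℝ) (x : ℝ) : ℕ :=
  sInf {n : ℕ | 1 ≤ n ∧ T.toFun^[n] x ∈ J}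

/-- The first return map `T_J`. -/
noncomputable def firstReturn (J : Set ℝ) (x : ℝ) : ℝ := T.toFun^[T.returnTime J x] x

/-- The first backward return time `b_J(x) = min {n ≥ 1 | T^{-n} x ∈ J}`. -/
noncomputable def backTime (J : Set ℝ) (x : ℝ) : ℕ :=
  sInf {n : ℕ | 1 ≤ n ∧ T.invFun^[n] x ∈ J}

/-- The first backward return map `p_J` (the inverse of the first return map `T_J`). -/
noncomputable def backReturn (J : Set ℝ) (x : ℝ) : ℝ := T.invFun^[T.backTime J x] x

/-- `m_{J,α} = inf {n ≥ 0 | T^{-n}(∂I_α) ∈ interior J}`. -/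
noncomputable def mJ (J : Set ℝ) (α : Fin T.d) : ℕ :=
  sInf {n : ℕ | T.invFun^[n] (T.lep α) ∈ interior J}

/-- `J` is of form (★): a subinterval `[a_J, b_J) ⊆ I` whose endpoints are iterates
`T^{m₀}(∂I_{α_J})`, `T^{n₀}(∂I_{β_J})` of left endpoints which do not visit `J` at any
earlier time between `0` and `m₀` (resp. `n₀`). -/
def IsStarForm (J : Set ℝ) : Prop :=
  ∃ (aJ bJ : ℝ) (αJ βJ : Fin T.d) (m₀ n₀ : ℤ),
    aJ < bJ ∧ J = Set.Ico aJ bJ ∧ J ⊆ Set.Ico T.a T.b ∧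
    aJ = T.iter m₀ (T.lep αJ) ∧ bJ = T.iter n₀ (T.lep βJ) ∧
    (∀ m : ℤ, (0 ≤ m ∧ m ≤ m₀ ∨ m₀ ≤ m ∧ m ≤ 0) → m ≠ m₀ → T.iter m (T.lep αJ) ∉ J) ∧
    (∀ n : ℤ, (0 ≤ n ∧ n ≤ n₀ ∨ n₀ ≤ n ∧ n ≤ 0) → n ≠ n₀ → T.iter n (T.lep βJ) ∉ J)

/-- `J` is a `β`-symmetric interval (`β : Option (Fin T.d)`, `none` = `1/2`-symmetric):
`J = [c_β - Δ, c_β + Δ)` with `Δ > 0`, contained in `I_β` (resp. in `I`). -/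
def IsSymmetricInterval (J : Set ℝ) (β : Option (Fin T.d)) : Prop :=
  ∃ Δ : ℝ, 0 < Δ ∧ J = Set.Ico (T.centerOpt β - Δ) (T.centerOpt β + Δ) ∧
    (match β with
      | some γ => J ⊆ T.interval γ
      | none => J ⊆ Set.Ico T.a T.b)

/-- `x` is a left endpoint of one of the intervals exchanged by the first return map
`T_J`, where `J = [aJ, bJ)`: either `x = aJ`, or the forward orbit of `x` before its
first return to `J` meets a left endpoint `∂I_α` of `T` or the right endpoint `bJ`. -/
def IsExchLeftEndpoint (J : Set ℝ) (aJ bJ : ℝ) (x : ℝ) : Prop :=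
  x = aJ ∨ ∃ k : ℕ, k < T.returnTime J x ∧
    ((∃ α : Fin T.d, T.toFun^[k] x = T.lep α) ∨ (1 ≤ k ∧ T.toFun^[k] x = bJ))

/-- A Rokhlin tower decomposition of `I = [a, b)` over `J = [aJ, bJ)` associated with the
first return map `T_J`: the bases `[base γ, base γ + blen γ)` partition `J`, the return
time on the base `γ` is constantly `h γ`, each `T^i` (`i ≤ h γ`) acts as a translation on
the base `γ`, and the tower levels `T^i([base γ, base γ + blen γ))`, `i < h γ`, are
pairwise disjoint and partition `I`. -/
def IsTowerDecomp (aJ bJ : ℝ) {k : ℕ} (base blen : Fin k → ℝ) (h : Fin k → ℕ) : Prop :=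
  (∀ γ, 0 < blen γ) ∧ (∀ γ, 1 ≤ h γ) ∧
  Pairwise (Function.onFun Disjoint fun γ => Set.Ico (base γ) (base γ + blen γ)) ∧
  (⋃ γ, Set.Ico (base γ) (base γ + blen γ)) = Set.Ico aJ bJ ∧
  (∀ γ, ∀ i ≤ h γ, ∀ x ∈ Set.Ico (base γ) (base γ + blen γ),
    T.toFun^[i] x - T.toFun^[i] (base γ) = x - base γ) ∧
  (∀ γ, ∀ x ∈ Set.Ico (base γ) (base γ + blen γ), T.returnTime (Set.Ico aJ bJ) x = h γ) ∧
  (⋃ γ, ⋃ i ∈ Finset.range (h γ), T.toFun^[i] '' Set.Ico (base γ) (base γ + blen γ))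
    = Set.Ico T.a T.b ∧
  (∀ γ γ' : Fin k, ∀ i i' : ℕ, i < h γ → i' < h γ' → (γ, i) ≠ (γ', i') →
    Disjoint (T.toFun^[i] '' Set.Ico (base γ) (base γ + blen γ))
      (T.toFun^[i'] '' Set.Ico (base γ') (base γ' + blen γ')))

/-- Replace the length data of an IET, keeping the combinatorial data. -/
noncomputable abbrev replaceLen (len' : Fin T.d → ℝ) (h1 : ∀ α, 0 < len' α)
    (h2 : ∑ α, len' α = T.b - T.a) : IET :=
  { T with len := len', len_pos := h1, len_sum := h2 }

end IET
namespace IET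

variable (T : IET)

noncomputable def pS (e : Fin T.d ≃ Fin T.d) (i : ℕ) : ℝ :=
  T.a + ∑ β ∈ Finset.univ.filter (fun β => (e β : ℕ) < i), T.len β

lemma pS_zero (e : Fin T.d ≃ Fin T.d) : T.pS e 0 = T.a := by simp [pS]

lemma pS_top (e : Fin T.d ≃ Fin T.d) {i : ℕ} (hi : T.d ≤ i) : T.pS e i = T.b := by
  unfold pS
  rw [Finset.filter_true_of_mem fun β _ => lt_of_lt_of_le (e β).isLt hi, T.len_sum]
  ring

lemma pS_mono (e : Fin T.d ≃ Fin T.d) {i j : ℕ} (h : i ≤ j) : T.pS e i ≤ T.pS e j := by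
  unfold pS
  apply add_le_add_right
  apply Finset.sum_le_sum_of_subset_of_nonneg
  · intro β hβ
    simp only [Finset.mem_filter, Finset.mem_univ, true_and] at *
    omega
  · intros
    exact (T.len_pos _).le

lemma pS_succ (e : Fin T.d ≃ Fin T.d) (i : Fin T.d) :
    T.pS e ((i : ℕ) + 1) = T.pS e i + T.len (e.symm i) := by
  unfold pS
  have h : Finset.univ.filter (fun β => (e β : ℕ) < (i : ℕ) + 1)
      = insert (e.symm i) (Finset.univ.filter fun β => (e β : ℕ) < (i : ℕ)) := by
    ext β
    simp only [Finset.mem_insert, Finset.mem_filter, Finset.mem_univ, true_and]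
    constructor
    · intro hb
      rcases Nat.lt_succ_iff_lt_or_eq.mp hb with h | h
      · exact Or.inr h
      · exact Or.inl (by rw [← Fin.ext h]; simp)
    · rintro (rfl | h)
      · simp
      · omega
  rw [h, Finset.sum_insert (by simp)]
  ring

lemma lep_eq_pS (α : Fin T.d) : T.lep α = T.pS T.perm0 (T.perm0 α) := by
  rfl

lemma lepImg_eq_pS (α : Fin T.d) : T.lepImg α = T.pS T.perm1 (T.perm1 α) := by
  rfl

lemma lep_add_len (α : Fin T.d) :
    T.lep α + T.len α = T.pS T.perm0 ((T.perm0 α : ℕ) + 1) := by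
  rw [lep_eq_pS, pS_succ]
  simp

lemma lepImg_add_len (α : Fin T.d) :
    T.lepImg α + T.len α = T.pS T.perm1 ((T.perm1 α : ℕ) + 1) := by
  rw [lepImg_eq_pS, pS_succ]
  simp

lemma interval_unique {x : ℝ} {α γ : Fin T.d}
    (hα : x ∈ T.interval α) (hγ : x ∈ T.interval γ) : α = γ := by
  simp only [interval, Set.mem_Ico] at hα hγ
  by_contra hne
  have hv : (T.perm0 α : ℕ) ≠ (T.perm0 γ : ℕ) := by
    intro h
    exact hne (T.perm0.injective (Fin.ext h))
  have h1 := T.lep_add_len α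
  have h2 := T.lep_add_len γ
  rcases hv.lt_or_gt with h | h
  · have := T.pS_mono T.perm0 (show (T.perm0 α : ℕ) + 1 ≤ (T.perm0 γ : ℕ) by omega)
    rw [T.lep_eq_pS γ] at hγ
    rw [← h1] at this
    linarith [hα.2, hγ.1]
  · have := T.pS_mono T.perm0 (show (T.perm0 γ : ℕ) + 1 ≤ (T.perm0 α : ℕ) by omega)
    rw [T.lep_eq_pS α] at hα
    rw [← h2] at this
    linarith [hγ.2, hα.1]

lemma intervalImg_unique {x : ℝ} {α γ : Fin T.d}
    (hα : x ∈ T.intervalImg α) (hγ : x ∈ T.intervalImg γ) : α = γ := by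
  simp only [intervalImg, Set.mem_Ico] at hα hγ
  by_contra hne
  have hv : (T.perm1 α : ℕ) ≠ (T.perm1 γ : ℕ) := by
    intro h
    exact hne (T.perm1.injective (Fin.ext h))
  have h1 := T.lepImg_add_len α
  have h2 := T.lepImg_add_len γ
  rcases hv.lt_or_gt with h | h
  · have := T.pS_mono T.perm1 (show (T.perm1 α : ℕ) + 1 ≤ (T.perm1 γ : ℕ) by omega)
    rw [T.lepImg_eq_pS γ] at hγ
    rw [← h1] at this
    linarith [hα.2, hγ.1]
  · have := T.pS_mono T.perm1 (show (T.perm1 γ : ℕ) + 1 ≤ (T.perm1 α : ℕ) by omega)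
    rw [T.lepImg_eq_pS α] at hα
    rw [← h2] at this
    linarith [hγ.2, hα.1]

lemma exists_interval {x : ℝ} (hx : x ∈ Set.Ico T.a T.b) : ∃ α, x ∈ T.interval α := by
  classical
  set s := (Finset.range T.d).filter (fun i => T.pS T.perm0 i ≤ x) with hs
  have h0 : (0 : ℕ) ∈ s := by
    simp only [hs, Finset.mem_filter, Finset.mem_range]
    exact ⟨T.hd, by rw [T.pS_zero]; exact hx.1⟩
  have hne : s.Nonempty := ⟨0, h0⟩
  set i := s.max' hne with hi
  have him : i ∈ s := s.max'_mem hne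
  simp only [hs, Finset.mem_filter, Finset.mem_range] at him
  refine ⟨T.perm0.symm ⟨i, him.1⟩, ?_⟩
  have hlep : T.lep (T.perm0.symm ⟨i, him.1⟩) = T.pS T.perm0 i := by
    rw [lep_eq_pS]; simp
  have hlen : T.lep (T.perm0.symm ⟨i, him.1⟩) + T.len (T.perm0.symm ⟨i, him.1⟩)
      = T.pS T.perm0 (i + 1) := by
    rw [lep_add_len]; simp
  have hup : x < T.pS T.perm0 (i + 1) := by
    rcases eq_or_lt_of_le (Nat.succ_le_of_lt him.1) with h | h
    · rw [T.pS_top T.perm0 (le_of_eq h.symm)]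
      exact hx.2
    · by_contra hc
      push_neg at hc
      have : i + 1 ∈ s := by
        simp only [hs, Finset.mem_filter, Finset.mem_range]
        exact ⟨h, hc⟩
      have := s.le_max' _ this
      omega
  exact ⟨by rw [hlep]; exact him.2, by rw [hlen]; exact hup⟩

lemma exists_intervalImg {x : ℝ} (hx : x ∈ Set.Ico T.a T.b) : ∃ α, x ∈ T.intervalImg α := by
  classical
  set s := (Finset.range T.d).filter (fun i => T.pS T.perm1 i ≤ x) with hs
  have h0 : (0 : ℕ) ∈ s := by
    simp only [hs, Finset.mem_filter, Finset.mem_range]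
    exact ⟨T.hd, by rw [T.pS_zero]; exact hx.1⟩
  have hne : s.Nonempty := ⟨0, h0⟩
  set i := s.max' hne with hi
  have him : i ∈ s := s.max'_mem hne
  simp only [hs, Finset.mem_filter, Finset.mem_range] at him
  refine ⟨T.perm1.symm ⟨i, him.1⟩, ?_⟩
  have hlep : T.lepImg (T.perm1.symm ⟨i, him.1⟩) = T.pS T.perm1 i := by
    rw [lepImg_eq_pS]; simp
  have hlen : T.lepImg (T.perm1.symm ⟨i, him.1⟩) + T.len (T.perm1.symm ⟨i, him.1⟩)
      = T.pS T.perm1 (i + 1) := by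
    rw [lepImg_add_len]; simp
  have hup : x < T.pS T.perm1 (i + 1) := by
    rcases eq_or_lt_of_le (Nat.succ_le_of_lt him.1) with h | h
    · rw [T.pS_top T.perm1 (le_of_eq h.symm)]
      exact hx.2
    · by_contra hc
      push_neg at hc
      have : i + 1 ∈ s := by
        simp only [hs, Finset.mem_filter, Finset.mem_range]
        exact ⟨h, hc⟩
      have := s.le_max' _ this
      omega
  exact ⟨by rw [hlep]; exact him.2, by rw [hlen]; exact hup⟩

end IET

namespace IET

variable (T : IET)

lemma toFun_apply {x : ℝ} {α : Fin T.d} (hx : x ∈ T.interval α) :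
    T.toFun x = x + T.transl α := by
  unfold toFun
  congr 1
  rw [Finset.sum_eq_single α]
  · rw [if_pos hx]
  · intro γ _ hγ
    rw [if_neg]
    intro hxg
    exact hγ (T.interval_unique hxg hx)
  · simp

lemma invFun_apply {x : ℝ} {α : Fin T.d} (hx : x ∈ T.intervalImg α) :
    T.invFun x = x - T.transl α := by
  unfold invFun
  rw [Finset.sum_eq_single α]
  · rw [if_pos hx]; ring
  · intro γ _ hγ
    rw [if_neg]
    intro hxg
    exact hγ (T.intervalImg_unique hxg hx)
  · simp

lemma toFun_mem_img {x : ℝ} {α : Fin T.d} (hx : x ∈ T.interval α) :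
    T.toFun x ∈ T.intervalImg α := by
  rw [T.toFun_apply hx]
  simp only [interval, intervalImg, Set.mem_Ico, transl] at *
  constructor <;> [linarith [hx.1]; linarith [hx.2]]

lemma invFun_mem_int {x : ℝ} {α : Fin T.d} (hx : x ∈ T.intervalImg α) :
    T.invFun x ∈ T.interval α := by
  rw [T.invFun_apply hx]
  simp only [interval, intervalImg, Set.mem_Ico, transl] at *
  constructor <;> [linarith [hx.1]; linarith [hx.2]]

lemma interval_subset (α : Fin T.d) : T.interval α ⊆ Set.Ico T.a T.b := by
  intro x hx
  simp only [interval, Set.mem_Ico] at hx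
  have h1 : T.a ≤ T.lep α := by
    rw [lep_eq_pS]
    have := T.pS_mono T.perm0 (Nat.zero_le (T.perm0 α))
    rwa [T.pS_zero] at this
  have h2 : T.lep α + T.len α ≤ T.b := by
    rw [lep_add_len]
    have := T.pS_mono T.perm0 (show (T.perm0 α : ℕ) + 1 ≤ T.d from (T.perm0 α).isLt)
    rwa [T.pS_top T.perm0 le_rfl] at this
  exact ⟨le_trans h1 hx.1, lt_of_lt_of_le hx.2 h2⟩

lemma intervalImg_subset (α : Fin T.d) : T.intervalImg α ⊆ Set.Ico T.a T.b := by
  intro x hx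
  simp only [intervalImg, Set.mem_Ico] at hx
  have h1 : T.a ≤ T.lepImg α := by
    rw [lepImg_eq_pS]
    have := T.pS_mono T.perm1 (Nat.zero_le (T.perm1 α))
    rwa [T.pS_zero] at this
  have h2 : T.lepImg α + T.len α ≤ T.b := by
    rw [lepImg_add_len]
    have := T.pS_mono T.perm1 (show (T.perm1 α : ℕ) + 1 ≤ T.d from (T.perm1 α).isLt)
    rwa [T.pS_top T.perm1 le_rfl] at this
  exact ⟨le_trans h1 hx.1, lt_of_lt_of_le hx.2 h2⟩

lemma toFun_mem_I {x : ℝ} (hx : x ∈ Set.Ico T.a T.b) : T.toFun x ∈ Set.Ico T.a T.b := by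
  obtain ⟨α, hα⟩ := T.exists_interval hx
  exact T.intervalImg_subset α (T.toFun_mem_img hα)

lemma invFun_mem_I {x : ℝ} (hx : x ∈ Set.Ico T.a T.b) : T.invFun x ∈ Set.Ico T.a T.b := by
  obtain ⟨α, hα⟩ := T.exists_intervalImg hx
  exact T.interval_subset α (T.invFun_mem_int hα)

lemma toFun_iter_mem {x : ℝ} (hx : x ∈ Set.Ico T.a T.b) (n : ℕ) :
    T.toFun^[n] x ∈ Set.Ico T.a T.b := by
  induction n with
  | zero => exact hx
  | succ n ih => rw [Function.iterate_succ_apply']; exact T.toFun_mem_I ih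

lemma invFun_iter_mem {x : ℝ} (hx : x ∈ Set.Ico T.a T.b) (n : ℕ) :
    T.invFun^[n] x ∈ Set.Ico T.a T.b := by
  induction n with
  | zero => exact hx
  | succ n ih => rw [Function.iterate_succ_apply']; exact T.invFun_mem_I ih

lemma invFun_toFun {x : ℝ} (hx : x ∈ Set.Ico T.a T.b) : T.invFun (T.toFun x) = x := by
  obtain ⟨α, hα⟩ := T.exists_interval hx
  rw [T.invFun_apply (T.toFun_mem_img hα), T.toFun_apply hα]
  ring

lemma toFun_invFun {x : ℝ} (hx : x ∈ Set.Ico T.a T.b) : T.toFun (T.invFun x) = x := by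
  obtain ⟨α, hα⟩ := T.exists_intervalImg hx
  rw [T.toFun_apply (T.invFun_mem_int hα), T.invFun_apply hα]
  ring

lemma invFun_toFun_iter (n : ℕ) {x : ℝ} (hx : x ∈ Set.Ico T.a T.b) :
    T.invFun^[n] (T.toFun^[n] x) = x := by
  induction n generalizing x with
  | zero => rfl
  | succ n ih =>
    rw [Function.iterate_succ_apply', Function.iterate_succ_apply,
      ih (T.toFun_mem_I hx), T.invFun_toFun hx]

lemma lep_mem (α : Fin T.d) : T.lep α ∈ T.interval α :=
  ⟨le_rfl, by linarith [T.len_pos α]⟩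

lemma lepImg_mem (α : Fin T.d) : T.lepImg α ∈ T.intervalImg α :=
  ⟨le_rfl, by linarith [T.len_pos α]⟩

lemma toFun_lep (α : Fin T.d) : T.toFun (T.lep α) = T.lepImg α := by
  rw [T.toFun_apply (T.lep_mem α), transl]
  ring

lemma invFun_lepImg (α : Fin T.d) : T.invFun (T.lepImg α) = T.lep α := by
  rw [T.invFun_apply (T.lepImg_mem α), transl]
  ring

lemma lepImg_symm (hs : T.IsSymm) (α : Fin T.d) :
    T.lepImg α = T.a + T.b - T.lep α - T.len α := by
  have h1 : Finset.univ.filter (fun γ => T.perm1 γ < T.perm1 α)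
      = Finset.univ.filter (fun γ => ¬ ((T.perm0 γ : ℕ) < (T.perm0 α : ℕ) + 1)) := by
    apply Finset.filter_congr
    intro γ _
    have hg := hs γ
    have ha := hs α
    have hga : (T.perm1 γ : ℕ) < (T.perm1 α : ℕ) ↔ (T.perm0 α : ℕ) + 1 ≤ (T.perm0 γ : ℕ) := by
      omega
    simp only [Fin.lt_def, hga, not_lt]
  have h2 := Finset.sum_filter_add_sum_filter_not Finset.univ
    (fun γ => (T.perm0 γ : ℕ) < (T.perm0 α : ℕ) + 1) T.len
  rw [T.len_sum] at h2
  have h3 : T.lep α + T.len α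
      = T.a + ∑ γ ∈ Finset.univ.filter (fun γ => (T.perm0 γ : ℕ) < (T.perm0 α : ℕ) + 1),
          T.len γ := T.lep_add_len α
  have h4 : T.lepImg α
      = T.a + ∑ γ ∈ Finset.univ.filter
          (fun γ => ¬ ((T.perm0 γ : ℕ) < (T.perm0 α : ℕ) + 1)), T.len γ := by
    rw [lepImg, h1]
  linarith

lemma conj_fwd (hs : T.IsSymm) {x : ℝ} (hx : x ∈ Set.Ico T.a T.b)
    (hlep : ∀ γ, x ≠ T.lep γ) : T.invFun (T.refl x) = T.refl (T.toFun x) := by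
  obtain ⟨α, hα⟩ := T.exists_interval hx
  have hsym := T.lepImg_symm hs α
  have hmem : T.refl x ∈ T.intervalImg α := by
    obtain ⟨h1, h2⟩ := hα
    have h1' : T.lep α < x := lt_of_le_of_ne h1 (Ne.symm (hlep α))
    unfold refl
    constructor <;> [linarith; linarith]
  rw [T.invFun_apply hmem, T.toFun_apply hα, refl, refl, transl]
  ring

lemma conj_bwd (hs : T.IsSymm) {x : ℝ} (hx : x ∈ Set.Ico T.a T.b)
    (hlep : ∀ γ, x ≠ T.lepImg γ) : T.toFun (T.refl x) = T.refl (T.invFun x) := by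
  obtain ⟨α, hα⟩ := T.exists_intervalImg hx
  have hsym := T.lepImg_symm hs α
  have hmem : T.refl x ∈ T.interval α := by
    obtain ⟨h1, h2⟩ := hα
    have h1' : T.lepImg α < x := lt_of_le_of_ne h1 (Ne.symm (hlep α))
    unfold refl
    constructor <;> [linarith; linarith]
  rw [T.toFun_apply hmem, T.invFun_apply hα, refl, refl, transl]
  ring

lemma center_mem (γ : Fin T.d) : T.center γ ∈ T.interval γ := by
  unfold center interval
  have := T.len_pos γ
  constructor <;> [linarith; linarith]

lemma centerOpt_mem (β : Option (Fin T.d)) : T.centerOpt β ∈ Set.Ico T.a T.b := by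
  cases β with
  | none =>
    have := T.hab
    unfold centerOpt centerHalf
    constructor <;> [linarith; linarith]
  | some γ => exact T.interval_subset γ (T.center_mem γ)

lemma refl_center (hs : T.IsSymm) (γ : Fin T.d) :
    T.refl (T.center γ) = T.toFun (T.center γ) := by
  rw [T.toFun_apply (T.center_mem γ), refl, center, transl, T.lepImg_symm hs γ]
  ring

lemma refl_centerHalf : T.refl T.centerHalf = T.centerHalf := by
  unfold refl centerHalf
  ring

lemma center_ne_lep (γ δ : Fin T.d) : T.center γ ≠ T.lep δ := by
  intro h
  have h1 : T.lep δ ∈ T.interval γ := h ▸ T.center_mem γ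
  have h2 := T.interval_unique h1 (T.lep_mem δ)
  subst h2
  have := T.len_pos γ
  rw [center] at h
  linarith

end IET

namespace IET

variable (T : IET)

lemma centerOpt_some (γ : Fin T.d) : T.centerOpt (some γ) = T.center γ := rfl

lemma centerOpt_none : T.centerOpt none = T.centerHalf := rfl

lemma deltaHalf_le_one (β : Option (Fin T.d)) : T.deltaHalf β ≤ 1 := by
  cases β <;> simp [deltaHalf]

end IET



open IET

/-- if for a symmetric IET some iterate `T^m(c_β) = ∂I_α` while no earlier
iterate (between `-|m|` and `|m|` exclusive) hits a left endpoint, then the corresponding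
opposite iterate `T^{-m-δ_{1/2}(β)}(c_β)` is the left endpoint `∂I_α̂` with `π₀ α̂` adjacent
to `π₀ α` (below if `m ≥ 0`, above if `m < 0`), and `c_β` lies inside a non-trivial
connection. -/
theorem stmt12 (T : IET) (hsymm : T.IsSymm) (β : Option (Fin T.d)) (m : ℤ)
    (α : Fin T.d) (hm : T.iter m (T.centerOpt β) = T.lep α)
    (havoid : ∀ k : ℤ, -|m| < k → k < |m| → ∀ γ : Fin T.d,
      T.iter k (T.centerOpt β) ≠ T.lep γ) :
    ((0 ≤ m → (T.perm0 α : ℕ) ≠ 0 ∧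
        ∃ α' : Fin T.d, (T.perm0 α' : ℕ) + 1 = (T.perm0 α : ℕ) ∧
          T.iter (-m - (T.deltaHalf β : ℤ)) (T.centerOpt β) = T.lep α') ∧
     (m < 0 → (T.perm1 α : ℕ) ≠ 0 ∧
        ∃ α' : Fin T.d, (T.perm0 α' : ℕ) = (T.perm0 α : ℕ) + 1 ∧
          T.iter (-m - (T.deltaHalf β : ℤ)) (T.centerOpt β) = T.lep α')) ∧
    ∃ s, T.IsConnection s ∧ T.centerOpt β ∈ s := by
  have hcI : T.centerOpt β ∈ Set.Ico T.a T.b := T.centerOpt_mem β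
  have hreflc : T.refl (T.centerOpt β) ∈ Set.Ico T.a T.b := by
    cases β with
    | none => rw [centerOpt_none, T.refl_centerHalf]; exact hcI
    | some γ =>
      rw [centerOpt_some, T.refl_center hsymm γ]
      exact T.toFun_mem_I (T.centerOpt_mem (some γ))
  have hδ1 := T.deltaHalf_le_one β
  have hsa := hsymm α
  have hdpos := T.hd
  have hlt0 := (T.perm0 α).isLt
  rcases le_or_gt 0 m with hm0 | hm0
  · -- case m ≥ 0
    set n := m.toNat with hn
    have hmn : m = (n : ℤ) := (Int.toNat_of_nonneg hm0).symm
    have hiter : T.toFun^[n] (T.centerOpt β) = T.lep α := by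
      rw [iter, if_pos hm0] at hm; exact hm
    have havoid' : ∀ j : ℕ, j < n → ∀ γ, T.toFun^[j] (T.centerOpt β) ≠ T.lep γ := by
      intro j hj γ
      have h1 : -|m| < (j : ℤ) := by rw [abs_of_nonneg hm0]; omega
      have h2 : (j : ℤ) < |m| := by rw [abs_of_nonneg hm0]; omega
      have h := havoid j h1 h2 γ
      rwa [iter, if_pos (Int.natCast_nonneg j), Int.toNat_natCast] at h
    have key : ∀ j, j ≤ n →
        T.invFun^[j] (T.refl (T.centerOpt β)) = T.refl (T.toFun^[j] (T.centerOpt β)) := by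
      intro j hj
      induction j with
      | zero => rfl
      | succ j ih =>
        rw [Function.iterate_succ_apply', Function.iterate_succ_apply', ih (by omega),
          T.conj_fwd hsymm (T.toFun_iter_mem hcI j) (havoid' j (by omega))]
    have hkeyn : T.invFun^[n] (T.refl (T.centerOpt β)) = T.refl (T.lep α) := by
      rw [key n le_rfl, hiter]
    have hmemI : T.invFun^[n] (T.refl (T.centerOpt β)) ∈ Set.Ico T.a T.b :=
      T.invFun_iter_mem hreflc n
    have hne0 : (T.perm0 α : ℕ) ≠ 0 := by
      intro h0
      have hπ1 : (T.perm1 α : ℕ) + 1 = T.d := by omega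
      have hb : T.refl (T.lep α) = T.b := by
        have h1 := T.lepImg_add_len α
        rw [hπ1, T.pS_top T.perm1 le_rfl] at h1
        have h2 := T.lepImg_symm hsymm α
        unfold IET.refl; linarith
      rw [hkeyn, hb] at hmemI
      exact absurd hmemI.2 (lt_irrefl _)
    have hlt' : (T.perm0 α : ℕ) - 1 < T.d := by omega
    set α' := T.perm0.symm ⟨(T.perm0 α : ℕ) - 1, hlt'⟩ with hα'def
    have hα' : (T.perm0 α' : ℕ) + 1 = (T.perm0 α : ℕ) := by
      rw [hα'def]
      simp only [Equiv.apply_symm_apply]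
      omega
    have hsa' := hsymm α'
    have hπ1' : (T.perm1 α' : ℕ) = (T.perm1 α : ℕ) + 1 := by omega
    have hrefl_eq : T.refl (T.lep α) = T.lepImg α' := by
      have h1 := T.lepImg_add_len α
      have h2 : T.lepImg α' = T.pS T.perm1 ((T.perm1 α : ℕ) + 1) := by
        rw [T.lepImg_eq_pS α', hπ1']
      have h3 := T.lepImg_symm hsymm α
      unfold IET.refl; linarith
    have hstep : T.invFun^[n + 1] (T.refl (T.centerOpt β)) = T.lep α' := by
      rw [Function.iterate_succ_apply', hkeyn, hrefl_eq, T.invFun_lepImg]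
    have hg : T.invFun^[n + T.deltaHalf β] (T.centerOpt β) = T.lep α'
        ∧ 1 ≤ n + T.deltaHalf β := by
      cases β with
      | none =>
        refine ⟨?_, by simp [deltaHalf]⟩
        rw [centerOpt_none, show T.deltaHalf none = 1 from rfl]
        rw [centerOpt_none, T.refl_centerHalf] at hstep
        exact hstep
      | some γ =>
        have hn1 : 1 ≤ n := by
          rcases Nat.eq_zero_or_pos n with h | h
          · exfalso
            rw [h] at hiter
            exact T.center_ne_lep γ α hiter
          · exact h
        refine ⟨?_, by simpa [deltaHalf] using hn1⟩
        rw [centerOpt_some, T.refl_center hsymm γ, Function.iterate_succ_apply,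
          T.invFun_toFun (T.interval_subset γ (T.center_mem γ))] at hstep
        rw [show T.deltaHalf (some γ) = 0 from rfl, Nat.add_zero, centerOpt_some]
        exact hstep
    have hgle := hg.2
    have htarget : T.iter (-m - (T.deltaHalf β : ℤ)) (T.centerOpt β) = T.lep α' := by
      rw [iter, if_neg (by omega), show (-(-m - (T.deltaHalf β : ℤ))).toNat
        = n + T.deltaHalf β by omega]
      exact hg.1
    have hπ1'ne : (T.perm1 α' : ℕ) ≠ 0 := by omega
    have hVn : T.invFun^[n] (T.lep α) = T.centerOpt β := by
      rw [← hiter, T.invFun_toFun_iter n hcI]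
    have hconn : T.invFun^[(n + T.deltaHalf β) + n] (T.lep α) = T.lep α' := by
      rw [Function.iterate_add_apply, hVn]
      exact hg.1
    refine ⟨⟨fun _ => ⟨hne0, α', hα', htarget⟩, fun h => absurd h (not_lt.mpr hm0)⟩,
      ⟨_, ⟨α, α', (n + T.deltaHalf β) + n, hne0, hπ1'ne, by omega, hconn, rfl⟩,
        ⟨n, by simp only [Set.mem_setOf_eq]; omega, hVn⟩⟩⟩
  · -- case m < 0
    set n := (-m).toNat with hn
    have hmn : m = -(n : ℤ) := by omega
    have hn1 : 1 ≤ n := by omega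
    obtain ⟨k, hk⟩ : ∃ k, n = k + 1 := ⟨n - 1, by omega⟩
    have hiter : T.invFun^[n] (T.centerOpt β) = T.lep α := by
      rw [iter, if_neg (by omega)] at hm; exact hm
    have havoid' : ∀ j : ℕ, j < n → ∀ γ, T.invFun^[j] (T.centerOpt β) ≠ T.lep γ := by
      intro j hj γ
      have h := havoid (-(j : ℤ)) (by rw [abs_of_neg hm0]; omega)
        (by rw [abs_of_neg hm0]; omega) γ
      rcases Nat.eq_zero_or_pos j with rfl | hjpos
      · simpa [iter] using h
      · rwa [iter, if_neg (by omega), show (-(-(j : ℤ))).toNat = j by omega] at h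
    have hnoimg : ∀ j : ℕ, j + 1 < n → ∀ γ, T.invFun^[j] (T.centerOpt β) ≠ T.lepImg γ := by
      intro j hj γ h
      have h2 : T.invFun^[j+1] (T.centerOpt β) = T.lep γ := by
        rw [Function.iterate_succ_apply', h, T.invFun_lepImg]
      exact havoid' (j+1) hj γ h2
    have key : ∀ j, j + 1 ≤ n →
        T.toFun^[j] (T.refl (T.centerOpt β)) = T.refl (T.invFun^[j] (T.centerOpt β)) := by
      intro j hj
      induction j with
      | zero => rfl
      | succ j ih =>
        rw [Function.iterate_succ_apply', Function.iterate_succ_apply', ih (by omega),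
          T.conj_bwd hsymm (T.invFun_iter_mem hcI j) (fun γ => hnoimg j (by omega) γ)]
    have hgn1 : T.invFun^[k] (T.centerOpt β) = T.lepImg α := by
      have h1 : T.invFun (T.invFun^[k] (T.centerOpt β)) = T.lep α := by
        have h0 : T.invFun^[k+1] (T.centerOpt β) = T.lep α := by rw [← hk]; exact hiter
        rwa [Function.iterate_succ_apply'] at h0
      have h2 := congrArg T.toFun h1
      rwa [T.toFun_invFun (T.invFun_iter_mem hcI k), T.toFun_lep] at h2
    have hkey : T.toFun^[k] (T.refl (T.centerOpt β)) = T.refl (T.lepImg α) := by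
      rw [key k (by omega), hgn1]
    have hmemI : T.toFun^[k] (T.refl (T.centerOpt β)) ∈ Set.Ico T.a T.b :=
      T.toFun_iter_mem hreflc k
    have hne1 : (T.perm1 α : ℕ) ≠ 0 := by
      intro h0
      have hd1 : (T.perm0 α : ℕ) + 1 = T.d := by omega
      have hb : T.refl (T.lepImg α) = T.b := by
        have h1 := T.lep_add_len α
        rw [hd1, T.pS_top T.perm0 le_rfl] at h1
        have h2 := T.lepImg_symm hsymm α
        unfold IET.refl; linarith
      rw [hkey, hb] at hmemI
      exact absurd hmemI.2 (lt_irrefl _)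
    have hlt' : (T.perm0 α : ℕ) + 1 < T.d := by omega
    set α' := T.perm0.symm ⟨(T.perm0 α : ℕ) + 1, hlt'⟩ with hα'def
    have hα' : (T.perm0 α' : ℕ) = (T.perm0 α : ℕ) + 1 := by
      rw [hα'def]
      simp only [Equiv.apply_symm_apply]
    have hrefl_eq : T.refl (T.lepImg α) = T.lep α' := by
      have h1 := T.lep_add_len α
      have h2 : T.lep α' = T.pS T.perm0 ((T.perm0 α : ℕ) + 1) := by
        rw [T.lep_eq_pS α', hα']
      have h3 := T.lepImg_symm hsymm α
      unfold IET.refl; linarith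
    have hstep : T.toFun^[k] (T.refl (T.centerOpt β)) = T.lep α' := by
      rw [hkey, hrefl_eq]
    have hg : T.toFun^[n - T.deltaHalf β] (T.centerOpt β) = T.lep α' := by
      cases β with
      | none =>
        rw [centerOpt_none, T.refl_centerHalf] at hstep
        rw [show T.deltaHalf none = 1 from rfl, centerOpt_none,
          show n - 1 = k by omega]
        exact hstep
      | some γ =>
        rw [centerOpt_some, T.refl_center hsymm γ] at hstep
        rw [show T.deltaHalf (some γ) = 0 from rfl, Nat.sub_zero, centerOpt_some, hk,
          Function.iterate_succ_apply]
        exact hstep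
    have htarget : T.iter (-m - (T.deltaHalf β : ℤ)) (T.centerOpt β) = T.lep α' := by
      rw [iter, if_pos (by omega), show (-m - (T.deltaHalf β : ℤ)).toNat
        = n - T.deltaHalf β by omega]
      exact hg
    have hπ0'ne : (T.perm0 α' : ℕ) ≠ 0 := by omega
    have hVn : T.invFun^[n - T.deltaHalf β] (T.lep α') = T.centerOpt β := by
      rw [← hg, T.invFun_toFun_iter _ hcI]
    have hconn : T.invFun^[n + (n - T.deltaHalf β)] (T.lep α') = T.lep α := by
      rw [Function.iterate_add_apply, hVn]
      exact hiter
    refine ⟨⟨fun h => absurd hm0 (not_lt.mpr h), fun _ => ⟨hne1, α', hα', htarget⟩⟩,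
      ⟨_, ⟨α', α, n + (n - T.deltaHalf β), hπ0'ne, hne1, by omega, hconn, rfl⟩,
        ⟨n - T.deltaHalf β, by simp only [Set.mem_setOf_eq]; omega, hVn⟩⟩⟩
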